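/- arXiv:1904.07988 — 2 statements merged into one kernel-verified Lean document; each statement's English description precedes it below -/
import Mathlib

section
/- For positive constants a, b and all vectors x, x₀ in R², the function g(x|x₀) = −a‖x‖²/b² + 2a(1/b² − 1/(a‖x₀‖² + b)²)⟨x, x₀⟩ + 1/(a‖x₀‖² + b) + 2a‖x₀‖²/(a‖x₀‖² + b)² − a‖x₀‖²/b² satisfies g(x|x₀) ≤ 1/(a‖x‖² + b). -/
/-!
Write `c = a‖x₀‖² + b`. The surrogate equals the tangent line of `t ↦ 1/t` at `c`, evaluated at
`t = a‖x‖² + b`, minus the nonnegative term `a (1/b² - 1/c²) ‖x - x₀‖²`; since `t ↦ 1/t` is convex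
on `(0, ∞)`, its tangent line lies below it.
-/

lemma one_div_sub_div_sq_le_one_div {c d : ℝ} (hc : 0 < c) (hd : 0 < d) :
    1 / c - (d - c) / c ^ 2 ≤ 1 / d := by
  have key : 1 / d - (1 / c - (d - c) / c ^ 2) = (d - c) ^ 2 / (c ^ 2 * d) := by
    field_simp
    ring
  have : 0 ≤ (d - c) ^ 2 / (c ^ 2 * d) := by positivity
  linarith

section InnerProductSpace

variable {E : Type*} [NormedAddCommGroup E] [InnerProductSpace ℝ E]

lemma surrogate_eq_tangent_sub {a b : ℝ} (hb : b ≠ 0) (x x₀ : E) (hc : a * ‖x₀‖ ^ 2 + b ≠ 0) :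
    - a * ‖x‖ ^ 2 / b ^ 2
      + 2 * a * (1 / b ^ 2 - 1 / (a * ‖x₀‖ ^ 2 + b) ^ 2) * inner ℝ x x₀
      + 1 / (a * ‖x₀‖ ^ 2 + b)
      + 2 * a * ‖x₀‖ ^ 2 / (a * ‖x₀‖ ^ 2 + b) ^ 2
      - a * ‖x₀‖ ^ 2 / b ^ 2
      = 1 / (a * ‖x₀‖ ^ 2 + b)
          - ((a * ‖x‖ ^ 2 + b) - (a * ‖x₀‖ ^ 2 + b)) / (a * ‖x₀‖ ^ 2 + b) ^ 2
          - a * (1 / b ^ 2 - 1 / (a * ‖x₀‖ ^ 2 + b) ^ 2) * ‖x - x₀‖ ^ 2 := by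
  rw [norm_sub_sq_real]
  field_simp
  ring

end InnerProductSpace

theorem surrogate_lower_bound (a b : ℝ) (ha : 0 < a) (hb : 0 < b)
    (x x₀ : EuclideanSpace ℝ (Fin 2)) :
    - a * ‖x‖ ^ 2 / b ^ 2
      + 2 * a * (1 / b ^ 2 - 1 / (a * ‖x₀‖ ^ 2 + b) ^ 2) * inner ℝ x x₀
      + 1 / (a * ‖x₀‖ ^ 2 + b)
      + 2 * a * ‖x₀‖ ^ 2 / (a * ‖x₀‖ ^ 2 + b) ^ 2
      - a * ‖x₀‖ ^ 2 / b ^ 2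
      ≤ 1 / (a * ‖x‖ ^ 2 + b) := by
  have hc : 0 < a * ‖x₀‖ ^ 2 + b := by positivity
  have hb_le_c : b ≤ a * ‖x₀‖ ^ 2 + b := le_add_of_nonneg_left (by positivity)
  have hcoef : 0 ≤ 1 / b ^ 2 - 1 / (a * ‖x₀‖ ^ 2 + b) ^ 2 :=
    sub_nonneg.mpr (one_div_le_one_div_of_le (by positivity) (by gcongr))
  rw [surrogate_eq_tangent_sub hb.ne' x x₀ hc.ne']
  calc _ ≤ 1 / (a * ‖x₀‖ ^ 2 + b)
          - ((a * ‖x‖ ^ 2 + b) - (a * ‖x₀‖ ^ 2 + b)) / (a * ‖x₀‖ ^ 2 + b) ^ 2 :=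
        sub_le_self _ (by positivity)
    _ ≤ _ := one_div_sub_div_sq_le_one_div hc (by positivity)
end

section
/- For positive constants a, b and any x in R², the matrix ∇²f(x) − ∇²g(x) is positive semidefinite, where ∇²f(x) = (−2a/(a‖x‖² + b)²)·I + (8a²/(a‖x‖² + b)³)·x xᵀ and ∇²g(x) = (−2a/b²)·I. -/
/-! The difference equals `α • 1 + β • x xᵀ` with `α = 2a/b² - 2a/(a‖x‖² + b)²` and
`β = 8a²/(a‖x‖² + b)³`; both are nonnegative because `a‖x‖² + b ≥ b > 0`, and `1`, `x xᵀ`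
are positive semidefinite. -/

open Matrix

theorem Matrix.posSemidef_smul_one_add_smul_vecMulVec_self_star {n R : Type*} [Fintype n]
    [DecidableEq n] [CommRing R] [PartialOrder R] [StarRing R] [StarOrderedRing R]
    {α β : R} (hα : 0 ≤ α) (hβ : 0 ≤ β) (v : n → R) :
    (α • (1 : Matrix n n R) + β • vecMulVec v (star v)).PosSemidef :=
  (PosSemidef.one.smul hα).add ((posSemidef_vecMulVec_self_star v).smul hβ)

theorem hessian_difference_psd (a b : ℝ) (ha : 0 < a) (hb : 0 < b)
    (x : EuclideanSpace ℝ (Fin 2)) :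
    (((-2 * a / (a * ‖x‖ ^ 2 + b) ^ 2) • (1 : Matrix (Fin 2) (Fin 2) ℝ)
        + (8 * a ^ 2 / (a * ‖x‖ ^ 2 + b) ^ 3) • Matrix.of (fun i j => x i * x j))
      - (-2 * a / b ^ 2) • (1 : Matrix (Fin 2) (Fin 2) ℝ)).PosSemidef := by
  set s := a * ‖x‖ ^ 2 + b
  have hbs : b ≤ s := le_add_of_nonneg_left (by positivity)
  have hα : 0 ≤ -2 * a / s ^ 2 - -2 * a / b ^ 2 := by
    have : 2 * a / s ^ 2 ≤ 2 * a / b ^ 2 := by gcongr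
    rw [neg_mul, neg_div, neg_div]
    linarith
  have hβ : 0 ≤ 8 * a ^ 2 / s ^ 3 := by positivity
  rw [add_sub_right_comm, ← sub_smul]
  exact posSemidef_smul_one_add_smul_vecMulVec_self_star hα hβ x.ofLp
end
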